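/- arXiv:2601.09024 — 5 statements merged into one kernel-verified Lean document; each statement's English description precedes it below -/
import Mathlib

section
/- Let X be a real Hilbert space, g: X → ℝ continuously Fréchet differentiable and convex, φ: X → (-∞, +∞] proper, closed, and convex, δ ≥ 0, and H := g + φ. Then x* is a δ-minimizer of H, i.e., H(x*) ≤ H(x) + δ‖x − x*‖ for all x ∈ X, if and only if −∇g(x*) ∈ ∂_δφ(x*). -/
open RealInnerProductSpace

/-- The δ-Fréchet subdifferential set. -/
def deltaSubdiff {X : Type*} [NormedAddCommGroup X] [InnerProductSpace ℝ X]
    (φ : X → ℝ) (δ : ℝ) (x : X) : Set X :=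
  {s | ∀ y : X, φ y ≥ φ x + ⟪s, y - x⟫ - δ * ‖y - x‖}

lemma dir_tendsto {X : Type*} [NormedAddCommGroup X] [InnerProductSpace ℝ X]
    [CompleteSpace X] (g : X → ℝ) (x v : X) (hg : DifferentiableAt ℝ g x) :
    Filter.Tendsto (fun t : ℝ => (g (x + t • v) - g x) / t)
      (nhdsWithin 0 (Set.Ioi 0)) (nhds ⟪gradient g x, v⟫) := by
  have hgrad : HasGradientAt g (gradient g x) x := hg.hasGradientAt
  have hfd : HasFDerivAt g ((InnerProductSpace.toDual ℝ X) (gradient g x)) x :=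
    hasGradientAt_iff_hasFDerivAt.mp hgrad
  have hline : HasDerivAt (fun t : ℝ => x + t • v) v 0 := by
    simpa using ((hasDerivAt_id (0:ℝ)).smul_const v).const_add x
  have hcomp : HasDerivAt (fun t : ℝ => g (x + t • v)) ⟪gradient g x, v⟫ 0 := by
    have hfd' : HasFDerivAt g ((InnerProductSpace.toDual ℝ X) (gradient g x))
        (x + (0:ℝ) • v) := by simpa using hfd
    have := hfd'.comp_hasDerivAt 0 hline
    simp only [InnerProductSpace.toDual_apply_apply] at this
    exact this
  have := hasDerivAt_iff_tendsto_slope.mp hcomp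
  have h2 := this.mono_left (nhdsWithin_mono 0 (by
    intro t ht
    exact ne_of_gt ht : Set.Ioi (0:ℝ) ⊆ {(0:ℝ)}ᶜ))
  refine h2.congr (fun t => ?_)
  simp [slope_def_field, div_eq_inv_mul]

lemma grad_ineq {X : Type*} [NormedAddCommGroup X] [InnerProductSpace ℝ X]
    [CompleteSpace X] (g : X → ℝ) (hg : ContDiff ℝ 1 g)
    (hconv : ConvexOn ℝ Set.univ g) (x y : X) :
    g x + ⟪gradient g x, y - x⟫ ≤ g y := by
  have hdiff : DifferentiableAt ℝ g x := (hg.differentiable one_ne_zero) x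
  have htend := dir_tendsto g x (y - x) hdiff
  have hle : ∀ᶠ t in nhdsWithin (0:ℝ) (Set.Ioi 0),
      (g (x + t • (y - x)) - g x) / t ≤ g y - g x := by
    filter_upwards [Ioo_mem_nhdsGT_of_mem (by norm_num : (0:ℝ) ∈ Set.Ico 0 1)]
      with t ht
    obtain ⟨ht0, ht1⟩ := ht
    have hconvle := hconv.2 (Set.mem_univ x) (Set.mem_univ y)
      (by linarith : (0:ℝ) ≤ 1 - t) (le_of_lt ht0) (by ring)
    have hpt : (1 - t) • x + t • y = x + t • (y - x) := by
      module
    simp only [smul_eq_mul] at hconvle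
    rw [hpt] at hconvle
    rw [div_le_iff₀ ht0]
    nlinarith [hconvle]
  have := le_of_tendsto htend hle
  linarith

theorem delta_minimizer_iff
    {X : Type*} [NormedAddCommGroup X] [InnerProductSpace ℝ X] [CompleteSpace X]
    (g : X → ℝ) (hg : ContDiff ℝ 1 g) (hgconv : ConvexOn ℝ Set.univ g)
    (φ : X → ℝ) (hφconv : ConvexOn ℝ Set.univ φ) (hφlsc : LowerSemicontinuous φ)
    (δ : ℝ) (hδ : 0 ≤ δ) (xstar : X) :
    (∀ x : X, g xstar + φ xstar ≤ g x + φ x + δ * ‖x - xstar‖) ↔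
      -gradient g xstar ∈ deltaSubdiff φ δ xstar := by
  constructor
  · intro hmin y
    have hdiff : DifferentiableAt ℝ g xstar := (hg.differentiable one_ne_zero) xstar
    set v := y - xstar with hv
    have htend := dir_tendsto g xstar v hdiff
    have hle : ∀ᶠ t in nhdsWithin (0:ℝ) (Set.Ioi 0),
        φ xstar - φ y - δ * ‖v‖ ≤ (g (xstar + t • v) - g xstar) / t := by
      filter_upwards [Ioo_mem_nhdsGT_of_mem (by norm_num : (0:ℝ) ∈ Set.Ico 0 1)]
        with t ht
      obtain ⟨ht0, ht1⟩ := ht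
      have hmin' := hmin (xstar + t • v)
      have hnorm : ‖xstar + t • v - xstar‖ = t * ‖v‖ := by
        rw [add_sub_cancel_left, norm_smul, Real.norm_eq_abs, abs_of_pos ht0]
      have hφle : φ (xstar + t • v) ≤ (1 - t) * φ xstar + t * φ y := by
        have := hφconv.2 (Set.mem_univ xstar) (Set.mem_univ y)
          (by linarith : (0:ℝ) ≤ 1 - t) (le_of_lt ht0) (by ring)
        have hpt : (1 - t) • xstar + t • y = xstar + t • v := by
          rw [hv]; module
        rw [hpt] at this
        simpa using this
      rw [hnorm] at hmin'
      rw [le_div_iff₀ ht0]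
      nlinarith
    have := ge_of_tendsto htend hle
    have hin : ⟪-gradient g xstar, y - xstar⟫ = -⟪gradient g xstar, v⟫ := by
      rw [hv, inner_neg_left]
    rw [ge_iff_le, hin]
    linarith
  · intro hsub x
    have hgi := grad_ineq g hg hgconv xstar x
    have hφi := hsub x
    have hin : ⟪-gradient g xstar, x - xstar⟫ = -⟪gradient g xstar, x - xstar⟫ :=
      inner_neg_left _ _
    rw [hin] at hφi
    linarith
end

section
/- Let X be a real Hilbert space, φ proper closed convex, x ∈ dom φ, and g ∈ X. Define p(r) := Prox_{rφ}(x − r·g) − x and Q(r) := ⟨g, p(r)⟩ + φ(x + p(r)) − φ(x). Then r ↦ Q(r) is nonincreasing on (0, ∞); moreover, if r > t > 0 and p(t) ≠ p(r), then Q(t) > Q(r). -/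
open RealInnerProductSpace

theorem Q_nonincreasing
    {X : Type*} [NormedAddCommGroup X] [InnerProductSpace ℝ X] [CompleteSpace X]
    (φ : X → ℝ) (hφconv : ConvexOn ℝ Set.univ φ) (hφlsc : LowerSemicontinuous φ)
    (x g : X) (u : ℝ → X)
    -- for each r > 0, u r = Prox_{rφ}(x - r g)
    (hu : ∀ r : ℝ, 0 < r → ∀ w : X,
        (1/(2*r)) * ‖u r - (x - r • g)‖^2 + φ (u r) ≤
          (1/(2*r)) * ‖w - (x - r • g)‖^2 + φ w)
    (p : ℝ → X) (hp : ∀ r, p r = u r - x)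
    (Q : ℝ → ℝ) (hQ : ∀ r, Q r = ⟪g, p r⟫ + φ (x + p r) - φ x) :
    (∀ t r : ℝ, 0 < t → t ≤ r → Q r ≤ Q t) ∧
      (∀ t r : ℝ, 0 < t → t < r → p t ≠ p r → Q t > Q r) := by
  -- rewrite Q
  have hQ' : ∀ r : ℝ, Q r = ⟪g, u r - x⟫ + φ (u r) - φ x := by
    intro r
    have hx : x + (u r - x) = u r := by abel
    rw [hQ r, hp r, hx]
  -- clean optimality (denominators cleared)
  have hopt : ∀ r : ℝ, 0 < r → ∀ w : X,
      ‖u r - x‖^2 + 2*r*⟪g, u r - x⟫ + 2*r*φ (u r) ≤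
        ‖w - x‖^2 + 2*r*⟪g, w - x⟫ + 2*r*φ w := by
    intro r hr w
    have h := hu r hr w
    have key : ∀ v : X, ‖v - (x - r • g)‖^2
        = ‖v - x‖^2 + 2*r*⟪g, v - x⟫ + r^2*‖g‖^2 := by
      intro v
      have hv : v - (x - r • g) = (v - x) + r • g := by abel
      rw [hv, norm_add_sq_real, real_inner_smul_right, real_inner_comm, norm_smul]
      rw [Real.norm_eq_abs, abs_of_pos hr]
      ring
    rw [key (u r), key w] at h
    have hrne : (2*r) ≠ 0 := by positivity
    have h3 := mul_le_mul_of_nonneg_left h (by positivity : (0:ℝ) ≤ 2*r)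
    have e : ∀ Z c : ℝ, (2*r) * ((1/(2*r))*Z + c) = Z + 2*r*c := by
      intro Z c; field_simp
    rw [e, e] at h3
    linarith
  -- strengthened optimality at t via midpoint
  have hmid : ∀ t : ℝ, 0 < t → ∀ w : X,
      ‖u t - x‖^2 + 2*t*⟪g, u t - x⟫ + 2*t*φ (u t) + (1/2)*‖w - u t‖^2 ≤
        ‖w - x‖^2 + 2*t*⟪g, w - x⟫ + 2*t*φ w := by
    intro t ht w
    set m : X := (1/2:ℝ) • u t + (1/2:ℝ) • w with hm
    have hφm : φ m ≤ (1/2)*φ (u t) + (1/2)*φ w := by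
      have := hφconv.2 (Set.mem_univ (u t)) (Set.mem_univ w)
        (by norm_num : (0:ℝ) ≤ 1/2) (by norm_num : (0:ℝ) ≤ 1/2) (by norm_num)
      simpa [hm, one_div, smul_eq_mul] using this
    have hmx : m - x = (1/2:ℝ) • (u t - x) + (1/2:ℝ) • (w - x) := by
      rw [hm]; module
    have hin : ⟪g, m - x⟫ = (1/2)*⟪g, u t - x⟫ + (1/2)*⟪g, w - x⟫ := by
      rw [hmx, inner_add_right, real_inner_smul_right, real_inner_smul_right]
    have hnorm : ‖m - x‖^2 = (1/2)*‖u t - x‖^2 + (1/2)*‖w - x‖^2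
        - (1/4)*‖w - u t‖^2 := by
      have h1 : ‖(u t - x) + (w - x)‖^2
          = ‖u t - x‖^2 + 2*⟪u t - x, w - x⟫ + ‖w - x‖^2 := norm_add_sq_real _ _
      have h2 : ‖(w - x) - (u t - x)‖^2
          = ‖w - x‖^2 - 2*⟪w - x, u t - x⟫ + ‖u t - x‖^2 := norm_sub_sq_real _ _
      have h4 : (w - x) - (u t - x) = w - u t := by abel
      have h5 : m - x = (1/2:ℝ) • ((u t - x) + (w - x)) := by
        rw [hmx, smul_add]
      have h6 : ‖m - x‖^2 = (1/4)*‖(u t - x) + (w - x)‖^2 := by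
        rw [h5, norm_smul, Real.norm_eq_abs]
        rw [abs_of_pos (by norm_num : (0:ℝ) < 1/2)]
        ring
      rw [h4] at h2
      rw [h6, h1]
      have hc : ⟪w - x, u t - x⟫ = ⟪u t - x, w - x⟫ := real_inner_comm _ _
      linarith
    have hopt' := hopt t ht m
    rw [hin, hnorm] at hopt'
    nlinarith [mul_le_mul_of_nonneg_left hφm (by positivity : (0:ℝ) ≤ 2*t)]
  -- key comparison for t < r
  have hkey : ∀ t r : ℝ, 0 < t → t < r →
      2*(r - t)*(Q r - Q t) ≤ -(1/2)*‖u r - u t‖^2 := by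
    intro t r ht htr
    have hr : 0 < r := ht.trans htr
    have h1 := hmid t ht (u r)
    have h2 := hopt r hr (u t)
    rw [hQ' t, hQ' r]
    nlinarith [h1, h2]
  constructor
  · intro t r ht htr
    rcases eq_or_lt_of_le htr with rfl | hlt
    · exact le_refl _
    · have hk := hkey t r ht hlt
      nlinarith [sq_nonneg ‖u r - u t‖, sub_pos.mpr hlt]
  · intro t r ht htr hne
    have hune : u r - u t ≠ 0 := by
      intro h
      apply hne
      rw [hp, hp]
      have : u r = u t := by
        have := sub_eq_zero.mp h; exact this
      rw [this]
    have hd : 0 < ‖u r - u t‖^2 := pow_pos (norm_pos_iff.mpr hune) 2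
    have hk := hkey t r ht htr
    nlinarith [sub_pos.mpr htr]
end

section
/- Let X be a real Hilbert space and A: X → X the bounded, self-adjoint, positive, invertible linear operator satisfying ⟨Ax, y⟩ = a(x,y) for a symmetric, coercive, continuous bilinear form a. Let φ be proper, closed, and convex and r > 0. For u ∈ X, u' := Prox^a_{rφ}(u − A⁻¹(u − x)) satisfies (1/r)(A − I)(u − u') ∈ ∂ψ(u'), where ψ(w) := (1/(2r))‖w − x‖² + φ(w) and ∂ψ is the (standard) convex subdifferential with respect to ⟨·,·⟩. -/
open RealInnerProductSpace

theorem weighted_prox_step_subdiff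
    {X : Type*} [NormedAddCommGroup X] [InnerProductSpace ℝ X] [CompleteSpace X]
    (φ : X → ℝ) (hφconv : ConvexOn ℝ Set.univ φ) (hφlsc : LowerSemicontinuous φ)
    (A Ainv : X →L[ℝ] X)
    (hsa : ∀ w v : X, ⟪A w, v⟫ = ⟪w, A v⟫)
    (α₁ : ℝ) (hα₁ : 0 < α₁) (hpos : ∀ w : X, α₁ * ‖w‖^2 ≤ ⟪A w, w⟫)
    (hinv₁ : ∀ w : X, A (Ainv w) = w) (hinv₂ : ∀ w : X, Ainv (A w) = w)
    (r : ℝ) (hr : 0 < r) (x u u' : X)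
    -- u' = Prox^a_{rφ}(u - A⁻¹(u - x)), the prox in the a-inner product a(w,v) = ⟪A w, v⟫
    (hu' : ∀ w : X,
        (1/(2*r)) * ⟪A (u' - (u - Ainv (u - x))), u' - (u - Ainv (u - x))⟫ + φ u' ≤
        (1/(2*r)) * ⟪A (w - (u - Ainv (u - x))), w - (u - Ainv (u - x))⟫ + φ w) :
    -- (1/r)(A - I)(u - u') is a subgradient of ψ(w) = (1/(2r))‖w - x‖² + φ w at u'
    ∀ z : X, (1/(2*r)) * ‖z - x‖^2 + φ z ≥
      (1/(2*r)) * ‖u' - x‖^2 + φ u' +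
        ⟪(1/r) • (A (u - u') - (u - u')), z - u'⟫ := by
  intro z
  set y := u - Ainv (u - x) with hy
  set v := z - u' with hv
  have hp : (0:ℝ) ≤ ⟪A v, v⟫ :=
    le_trans (by positivity) (hpos v)
  set s := (⟪A (u' - y), v⟫ : ℝ) with hs
  set d := (1/(2*r)) * ⟪A v, v⟫ with hd
  have hd0 : 0 ≤ d := by
    apply mul_nonneg _ hp
    positivity
  -- key inequality for small t
  have key : ∀ t : ℝ, 0 < t → t ≤ 1 →
      0 ≤ (1/r) * s + φ z - φ u' + t * d := by
    intro t ht ht1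
    have hw := hu' (u' + t • v)
    have hφw : φ (u' + t • v) ≤ (1 - t) * φ u' + t * φ z := by
      have h2 := hφconv.2 (Set.mem_univ u') (Set.mem_univ z)
        (by linarith : (0:ℝ) ≤ 1 - t) (le_of_lt ht) (by ring)
      have hpt : (1 - t) • u' + t • z = u' + t • v := by
        simp only [hv, sub_smul, one_smul, smul_sub]
        abel
      rw [hpt] at h2
      simpa using h2
    have hquad : (⟪A (u' + t • v - y), u' + t • v - y⟫ : ℝ) =
        ⟪A (u' - y), u' - y⟫ + 2 * t * s + t^2 * ⟪A v, v⟫ := by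
      have h1 : u' + t • v - y = (u' - y) + t • v := by abel
      rw [h1, map_add, map_smul]
      rw [inner_add_left, inner_add_right, inner_add_right,
        real_inner_smul_left, real_inner_smul_left,
        real_inner_smul_right, real_inner_smul_right]
      have hsym : (⟪A v, u' - y⟫ : ℝ) = ⟪A (u' - y), v⟫ := by
        rw [hsa, real_inner_comm]
      rw [hsym, hs]
      ring
    rw [hquad] at hw
    have expand : t * ((1/r) * s + φ z - φ u' + t * d) =
        1/(2*r) * (⟪A (u' - y), u' - y⟫ + 2 * t * s + t^2 * ⟪A v, v⟫)
          + (t * φ z + (1 - t) * φ u')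
          - (1/(2*r) * ⟪A (u' - y), u' - y⟫ + φ u') := by
      rw [hd]; field_simp; ring
    have h0 : 0 ≤ t * ((1/r) * s + φ z - φ u' + t * d) := by
      rw [expand]; linarith [hw, hφw]
    exact nonneg_of_mul_nonneg_right h0 ht
  -- conclude the limit inequality
  have hc : 0 ≤ (1/r) * s + φ z - φ u' := by
    by_contra hcon
    push_neg at hcon
    set c := (1/r) * s + φ z - φ u' with hcdef
    have htpos : 0 < -c / (2 * (d + 1)) := by
      apply div_pos (by linarith) (by linarith)
    set t := min 1 (-c / (2 * (d + 1))) with htdef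
    have ht : 0 < t := lt_min one_pos htpos
    have hkey := key t ht (min_le_left _ _)
    have htle : t ≤ -c / (2 * (d + 1)) := min_le_right _ _
    have h2 : t * (2 * (d + 1)) ≤ -c := by
      rw [← le_div_iff₀ (by linarith)]
      exact htle
    linarith [h2, hkey, ht]
  -- rewrite s
  have hAy : A (u' - y) = A u' - A u + (u - x) := by
    rw [hy]
    have : u' - (u - Ainv (u - x)) = (u' - u) + Ainv (u - x) := by abel
    rw [this, map_add, map_sub, hinv₁]
  have hs' : s = ⟪A u' - A u, v⟫ + ⟪u - x, v⟫ := by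
    rw [hs, hAy, inner_add_left]
  -- norm expansion
  have hnorm : ‖z - x‖^2 = ‖u' - x‖^2 + 2 * ⟪u' - x, v⟫ + ‖v‖^2 := by
    have hzx : z - x = (u' - x) + v := by rw [hv]; abel
    rw [hzx, norm_add_sq_real]
  -- the subgradient inner product
  have hinner : (⟪(1/r) • (A (u - u') - (u - u')), v⟫ : ℝ) =
      (1/r) * (⟪A u - A u', v⟫ - (⟪u - x, v⟫ - ⟪u' - x, v⟫)) := by
    rw [real_inner_smul_left, inner_sub_left, map_sub]
    have huu : u - u' = (u - x) - (u' - x) := by abel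
    rw [huu, inner_sub_left, inner_sub_left]
  have hflip : (⟪A u - A u', v⟫ : ℝ) = -⟪A u' - A u, v⟫ := by
    rw [← inner_neg_left]; congr 1; abel
  have hvnorm : (0:ℝ) ≤ ‖v‖^2 := by positivity
  have hr2 : (0:ℝ) < 1/(2*r) := by positivity
  rw [ge_iff_le, hnorm, hinner, hflip]
  have h1r : (1/(2*r)) * 2 = 1/r := by field_simp
  nlinarith [hc, hs']
end

section
/- Let X be a real Hilbert space with inner product ⟨·,·⟩, let a be a symmetric, coercive (constant α₁), continuous (constant α₂) bilinear form with associated operator A satisfying ⟨Ax,y⟩ = a(x,y), let φ be proper, closed, and convex, r > 0, and x ∈ X. Suppose consecutive iterates of the a-weighted proximal gradient method, u_{ℓ+1} = Prox^a_{rφ}(u_ℓ − A⁻¹(u_ℓ − x)), satisfy ‖u_ℓ − u_{ℓ+1}‖_a ≤ ε with ε ≤ rδ√α₁/(1 + α₂). Then u_{ℓ+1} ∈ Prox_{rφ}(x, δ), i.e., (1/(2r))‖u_{ℓ+1} − x‖² + φ(u_{ℓ+1}) ≤ (1/(2r))‖z − x‖² + φ(z) + δ‖z − u_{ℓ+1}‖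 for all z ∈ X. -/
open RealInnerProductSpace

set_option maxHeartbeats 2000000 in
theorem weighted_prox_stop_is_delta_prox
    {X : Type*} [NormedAddCommGroup X] [InnerProductSpace ℝ X] [CompleteSpace X]
    (φ : X → ℝ) (hφconv : ConvexOn ℝ Set.univ φ) (hφlsc : LowerSemicontinuous φ)
    (A Ainv : X →L[ℝ] X)
    (hsa : ∀ w v : X, ⟪A w, v⟫ = ⟪w, A v⟫)
    (α₁ α₂ : ℝ) (hα₁ : 0 < α₁) (hα₁₂ : α₁ ≤ α₂)
    (hcoer : ∀ w : X, α₁ * ‖w‖^2 ≤ ⟪A w, w⟫)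
    (hcont : ∀ w v : X, ⟪A w, v⟫ ≤ α₂ * ‖w‖ * ‖v‖)
    (hinv₁ : ∀ w : X, A (Ainv w) = w) (hinv₂ : ∀ w : X, Ainv (A w) = w)
    (r δ ε : ℝ) (hr : 0 < r) (hδ : 0 ≤ δ)
    (hε : ε ≤ r * δ * Real.sqrt α₁ / (1 + α₂))
    (x uℓ u' : X)
    -- u' = Prox^a_{rφ}(uℓ - A⁻¹(uℓ - x)) in the a-inner product a(w,v) = ⟪A w, v⟫
    (hu' : ∀ w : X,
        (1/(2*r)) * ⟪A (u' - (uℓ - Ainv (uℓ - x))), u' - (uℓ - Ainv (uℓ - x))⟫ + φ u' ≤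
        (1/(2*r)) * ⟪A (w - (uℓ - Ainv (uℓ - x))), w - (uℓ - Ainv (uℓ - x))⟫ + φ w)
    (hstop : Real.sqrt ⟪A (uℓ - u'), uℓ - u'⟫ ≤ ε) :
    ∀ z : X, (1/(2*r)) * ‖u' - x‖^2 + φ u' ≤
      (1/(2*r)) * ‖z - x‖^2 + φ z + δ * ‖z - u'‖ := by
  intro z
  have hα₂ : 0 < α₂ := lt_of_lt_of_le hα₁ hα₁₂
  have asymm : ∀ w v : X, ⟪A w, v⟫ = ⟪A v, w⟫ := fun w v => by
    rw [hsa, real_inner_comm]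
  set y := uℓ - Ainv (uℓ - x) with hy
  set d := z - u' with hd
  set p := u' - y with hp
  -- variational inequality
  have VI : 0 ≤ ⟪A p, d⟫ + r * (φ z - φ u') := by
    by_contra h
    push_neg at h
    set c := ⟪A p, d⟫ + r * (φ z - φ u') with hc
    have hdd : 0 ≤ ⟪A d, d⟫ := le_trans (by positivity) (hcoer d)
    set t : ℝ := min 1 ((-c) / (⟪A d, d⟫ + 1)) with ht
    have ht0 : 0 < t := lt_min one_pos (div_pos (neg_pos.2 h) (by linarith))
    have ht1 : t ≤ 1 := min_le_left _ _
    have key := hu' (u' + t • d)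
    have hexp : u' + t • d - y = p + t • d := by rw [hp]; abel
    have hq : ⟪A (p + t • d), p + t • d⟫
        = ⟪A p, p⟫ + 2 * t * ⟪A p, d⟫ + t^2 * ⟪A d, d⟫ := by
      rw [map_add, inner_add_left, inner_add_right, inner_add_right, map_smul,
        inner_smul_left, inner_smul_left, inner_smul_right, inner_smul_right]
      rw [asymm d p]
      ring_nf
      simp [RCLike.ofReal_real_eq_id]
      ring
    have hcvx : φ (u' + t • d) ≤ (1 - t) * φ u' + t * φ z := by
      have heq : u' + t • d = (1 - t) • u' + t • z := by
        rw [hd]; module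
      rw [heq]
      exact hφconv.2 (Set.mem_univ u') (Set.mem_univ z) (by linarith) (le_of_lt ht0)
        (by ring)
    rw [hexp, hq] at key
    have key2 : 0 ≤ t / r * ⟪A p, d⟫ + t^2 / (2*r) * ⟪A d, d⟫ + t * (φ z - φ u') := by
      have hr' : (0:ℝ) < 2 * r := by linarith
      have := le_trans key (by linarith [hcvx] :
        (1/(2*r)) * (⟪A p, p⟫ + 2 * t * ⟪A p, d⟫ + t^2 * ⟪A d, d⟫) + φ (u' + t • d)
          ≤ (1/(2*r)) * (⟪A p, p⟫ + 2 * t * ⟪A p, d⟫ + t^2 * ⟪A d, d⟫)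
            + ((1 - t) * φ u' + t * φ z))
      have h2 : 0 ≤ (1/(2*r)) * (2 * t * ⟪A p, d⟫ + t^2 * ⟪A d, d⟫)
          + t * (φ z - φ u') := by linarith [this]
      calc (0:ℝ) ≤ (1/(2*r)) * (2 * t * ⟪A p, d⟫ + t^2 * ⟪A d, d⟫)
          + t * (φ z - φ u') := h2
        _ = t / r * ⟪A p, d⟫ + t^2 / (2*r) * ⟪A d, d⟫ + t * (φ z - φ u') := by
            field_simp
    -- divide by t and multiply by r
    have key3 : 0 ≤ c + t / 2 * ⟪A d, d⟫ := by
      have := mul_le_mul_of_nonneg_left key2 (le_of_lt hr)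
      rw [mul_zero] at this
      have h3 : 0 ≤ t * (⟪A p, d⟫ + r * (φ z - φ u')) + t * (t / 2 * ⟪A d, d⟫) := by
        calc (0:ℝ) ≤ r * (t / r * ⟪A p, d⟫ + t^2 / (2*r) * ⟪A d, d⟫
            + t * (φ z - φ u')) := this
          _ = t * (⟪A p, d⟫ + r * (φ z - φ u')) + t * (t / 2 * ⟪A d, d⟫) := by
              field_simp; ring
      nlinarith [h3, ht0]
    have htc : t / 2 * ⟪A d, d⟫ ≤ -c / 2 := by
      have h1 : t ≤ (-c) / (⟪A d, d⟫ + 1) := min_le_right _ _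
      have h2 : t * ⟪A d, d⟫ ≤ (-c) / (⟪A d, d⟫ + 1) * ⟪A d, d⟫ :=
        mul_le_mul_of_nonneg_right h1 hdd
      have h3 : (-c) / (⟪A d, d⟫ + 1) * ⟪A d, d⟫ ≤ -c := by
        rw [div_mul_eq_mul_div, div_le_iff₀ (by linarith)]
        nlinarith [neg_pos.2 h]
      linarith
    linarith
  -- rewrite A p
  have hAp : A p = A (u' - uℓ) + (uℓ - x) := by
    rw [hp, hy]
    have : u' - (uℓ - Ainv (uℓ - x)) = (u' - uℓ) + Ainv (uℓ - x) := by abel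
    rw [this, map_add, hinv₁]
  -- norm bounds
  set w := uℓ - u' with hw
  have hAw : ‖A w‖ ≤ α₂ * ‖w‖ := by
    have h := hcont w (A w)
    rw [real_inner_self_eq_norm_sq, pow_two] at h
    rcases (norm_nonneg (A w)).eq_or_lt' with h0 | h0
    · rw [h0]; positivity
    · exact le_of_mul_le_mul_right h h0
  have hwb : (1 + α₂) * ‖w‖ ≤ r * δ := by
    have hs : 0 < Real.sqrt α₁ := Real.sqrt_pos.2 hα₁
    have haw : ⟪A w, w⟫ ≤ ε ^ 2 := by
      have h0 : 0 ≤ ⟪A w, w⟫ := le_trans (by positivity) (hcoer w)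
      have hε0 : 0 ≤ ε := le_trans (Real.sqrt_nonneg _) hstop
      have h2 := pow_le_pow_left₀ (Real.sqrt_nonneg ⟪A w, w⟫) hstop 2
      rwa [Real.sq_sqrt h0] at h2
    have h1 : Real.sqrt α₁ * ‖w‖ ≤ ε := by
      have hsq : (Real.sqrt α₁ * ‖w‖)^2 ≤ ε^2 := by
        have := hcoer w
        calc (Real.sqrt α₁ * ‖w‖)^2 = α₁ * ‖w‖^2 := by
              rw [mul_pow, Real.sq_sqrt (le_of_lt hα₁)]
          _ ≤ ⟪A w, w⟫ := this
          _ ≤ ε^2 := haw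
      have hε0 : 0 ≤ ε := le_trans (Real.sqrt_nonneg _) hstop
      have h4 := Real.sqrt_le_sqrt hsq
      rwa [Real.sqrt_sq (mul_nonneg (Real.sqrt_nonneg α₁) (norm_nonneg w)),
        Real.sqrt_sq hε0] at h4
    have h2 : ε * (1 + α₂) ≤ r * δ * Real.sqrt α₁ := by
      rw [le_div_iff₀ (by linarith : (0:ℝ) < 1 + α₂)] at hε
      linarith [hε]
    have h3 : Real.sqrt α₁ * ‖w‖ * (1 + α₂) ≤ r * δ * Real.sqrt α₁ := by
      calc Real.sqrt α₁ * ‖w‖ * (1 + α₂) ≤ ε * (1 + α₂) := by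
            apply mul_le_mul_of_nonneg_right h1; linarith
        _ ≤ r * δ * Real.sqrt α₁ := h2
    have h4 : Real.sqrt α₁ * ((1 + α₂) * ‖w‖) ≤ Real.sqrt α₁ * (r * δ) := by
      nlinarith [h3]
    exact le_of_mul_le_mul_left h4 hs
  -- Cauchy-Schwarz bound
  have hCS : -((1 + α₂) * ‖w‖ * ‖d‖) ≤ ⟪u' - uℓ - A (u' - uℓ), d⟫ := by
    have habs := abs_real_inner_le_norm (u' - uℓ - A (u' - uℓ)) d
    have hn : ‖u' - uℓ - A (u' - uℓ)‖ ≤ (1 + α₂) * ‖w‖ := by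
      calc ‖u' - uℓ - A (u' - uℓ)‖ ≤ ‖u' - uℓ‖ + ‖A (u' - uℓ)‖ := norm_sub_le _ _
        _ ≤ ‖w‖ + α₂ * ‖w‖ := by
            have h1 : u' - uℓ = -w := by rw [hw]; abel
            have h2 : ‖u' - uℓ‖ = ‖w‖ := by rw [h1, norm_neg]
            have h3 : ‖A (u' - uℓ)‖ = ‖A w‖ := by rw [h1, map_neg, norm_neg]
            rw [h2, h3]; linarith [hAw]
        _ = (1 + α₂) * ‖w‖ := by ring
    have := neg_abs_le ⟪u' - uℓ - A (u' - uℓ), d⟫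
    have hb : |⟪u' - uℓ - A (u' - uℓ), d⟫| ≤ (1 + α₂) * ‖w‖ * ‖d‖ :=
      le_trans habs (mul_le_mul_of_nonneg_right hn (norm_nonneg d))
    linarith [abs_le.1 hb]
  -- put together
  have hnorm : ‖z - x‖^2 = ‖d‖^2 + 2 * ⟪d, u' - x⟫ + ‖u' - x‖^2 := by
    have : z - x = d + (u' - x) := by rw [hd]; abel
    rw [this, @norm_add_sq_real]
  have hVI2 : 0 ≤ ⟪A (u' - uℓ), d⟫ + ⟪uℓ - x, d⟫ + r * (φ z - φ u') := by
    rw [hAp, inner_add_left] at VI; linarith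
  have hinner : ⟪u' - x, d⟫ = ⟪u' - uℓ - A (u' - uℓ), d⟫
      + ⟪A (u' - uℓ), d⟫ + ⟪uℓ - x, d⟫ := by
    rw [← inner_add_left, ← inner_add_left]
    congr 1
    abel
  have hdelta : (1 + α₂) * ‖w‖ * ‖d‖ ≤ r * δ * ‖d‖ :=
    mul_le_mul_of_nonneg_right hwb (norm_nonneg d)
  have hfin : 0 ≤ (1/(2*r)) * (‖d‖^2 + 2 * ⟪d, u' - x⟫) + (φ z - φ u') + δ * ‖d‖ := by
    have h1 : ⟪d, u' - x⟫ = ⟪u' - x, d⟫ := real_inner_comm _ _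
    have h2 : r * (φ z - φ u') ≥ -(⟪A (u' - uℓ), d⟫ + ⟪uℓ - x, d⟫) := by linarith
    have h3 : (0:ℝ) ≤ ‖d‖^2 := sq_nonneg _
    have hr2 : (0:ℝ) < 2 * r := by linarith
    rw [h1, hinner]
    have goal2 : 0 ≤ ⟪u' - uℓ - A (u' - uℓ), d⟫ + r * δ * ‖d‖ := by
      linarith [hCS, hdelta]
    have expand : (1/(2*r)) * (‖d‖^2 + 2 * (⟪u' - uℓ - A (u' - uℓ), d⟫
        + ⟪A (u' - uℓ), d⟫ + ⟪uℓ - x, d⟫)) + (φ z - φ u') + δ * ‖d‖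
        = (1/(2*r)) * ‖d‖^2
          + (1/r) * (⟪u' - uℓ - A (u' - uℓ), d⟫ + r * δ * ‖d‖)
          + (1/r) * ((⟪A (u' - uℓ), d⟫ + ⟪uℓ - x, d⟫) + r * (φ z - φ u')) := by
      field_simp; ring
    rw [expand]
    have t1 : (0:ℝ) ≤ (1/(2*r)) * ‖d‖^2 := by positivity
    have t2 : (0:ℝ) ≤ (1/r) * (⟪u' - uℓ - A (u' - uℓ), d⟫ + r * δ * ‖d‖) :=
      mul_nonneg (by positivity) goal2
    have t3 : (0:ℝ) ≤ (1/r) * ((⟪A (u' - uℓ), d⟫ + ⟪uℓ - x, d⟫) + r * (φ z - φ u')) :=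
      mul_nonneg (by positivity) (by linarith [hVI2])
    linarith
  rw [hnorm]
  have hr2 : (0:ℝ) < 2 * r := by linarith
  nlinarith [hfin]
end

section
/- Let X be a real Hilbert space, φ proper closed convex, x ∈ X, r > 0, δ ≥ 0, and suppose u ∈ Prox_{rφ}(x, δ). Then ‖u − Prox_{rφ}(x)‖ ≤ 2rδ, where Prox_{rφ}(x) is the exact proximity operator. -/
open RealInnerProductSpace

/-- The δ-proximity operator set. -/
def deltaProx {X : Type*} [NormedAddCommGroup X] [InnerProductSpace ℝ X]
    (φ : X → ℝ) (r δ : ℝ) (x : X) : Set X :=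
  {p | ∀ z : X, (1/(2*r)) * ‖p - x‖^2 + φ p ≤ (1/(2*r)) * ‖z - x‖^2 + φ z + δ * ‖z - p‖}

lemma norm_combo_sq {X : Type*} [NormedAddCommGroup X] [InnerProductSpace ℝ X]
    (a b : X) (t : ℝ) :
    ‖t • a + (1 - t) • b‖^2 = t * ‖a‖^2 + (1 - t) * ‖b‖^2 - t * (1 - t) * ‖a - b‖^2 := by
  have h1 : ∀ v : X, ‖v‖^2 = ⟪v, v⟫ := fun v => (real_inner_self_eq_norm_sq v).symm
  rw [h1, h1, h1, h1]
  simp only [inner_add_left, inner_add_right, inner_sub_left, inner_sub_right,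
    real_inner_smul_left, real_inner_smul_right]
  rw [real_inner_comm b a]
  ring

theorem delta_prox_error_bound
    {X : Type*} [NormedAddCommGroup X] [InnerProductSpace ℝ X] [CompleteSpace X]
    (φ : X → ℝ) (hφconv : ConvexOn ℝ Set.univ φ) (hφlsc : LowerSemicontinuous φ)
    (x : X) (r δ : ℝ) (hr : 0 < r) (hδ : 0 ≤ δ)
    (u pstar : X)
    (hu : u ∈ deltaProx φ r δ x)
    -- pstar = Prox_{rφ}(x), the exact minimizer
    (hpstar : ∀ z : X, (1/(2*r)) * ‖pstar - x‖^2 + φ pstar ≤ (1/(2*r)) * ‖z - x‖^2 + φ z) :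
    ‖u - pstar‖ ≤ 2 * r * δ := by
  set q := ‖u - pstar‖ with hqdef
  have hq0 : 0 ≤ q := norm_nonneg _
  set c : ℝ := 1/(2*r) with hcdef
  have hc : 0 < c := by positivity
  have hrc : 2 * r * c = 1 := by rw [hcdef]; field_simp
  have key : ∀ t : ℝ, 0 < t → t < 1 → (1 - t) * q^2 ≤ 2*r*δ*q := by
    intro t ht0 ht1
    have h1 := hu pstar
    have hnorm : ‖pstar - u‖ = q := by rw [hqdef, norm_sub_rev]
    rw [hnorm] at h1
    have h2 := hpstar (t • u + (1 - t) • pstar)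
    have hφ : φ (t • u + (1 - t) • pstar) ≤ t * φ u + (1 - t) * φ pstar := by
      have hcvx : ∀ a b : ℝ, 0 ≤ a → 0 ≤ b → a + b = 1 →
          φ (a • u + b • pstar) ≤ a * φ u + b * φ pstar := by
        intro a b ha hb hab
        simpa using hφconv.2 (Set.mem_univ u) (Set.mem_univ pstar) ha hb hab
      exact hcvx t (1 - t) ht0.le (by linarith) (by ring)
    have hid : ‖t • u + (1 - t) • pstar - x‖^2
        = t * ‖u - x‖^2 + (1 - t) * ‖pstar - x‖^2 - t * (1 - t) * q^2 := by
      have h := norm_combo_sq (u - x) (pstar - x) t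
      have e1 : t • (u - x) + (1 - t) • (pstar - x) = t • u + (1 - t) • pstar - x := by
        simp only [smul_sub]
        module
      have e2 : (u - x) - (pstar - x) = u - pstar := by abel
      rw [e1, e2] at h
      rw [h, hqdef]
    rw [hid] at h2
    -- h2 : c * ‖pstar - x‖^2 + φ pstar ≤ c * (t*‖u-x‖^2 + (1-t)*‖pstar-x‖^2 - t*(1-t)*q^2) + φ(combo)
    -- h1 : c * ‖u - x‖^2 + φ u ≤ c * ‖pstar - x‖^2 + φ pstar + δ * q
    have h3 : t * (c * ((1-t)*q^2)) ≤ t * (δ * q) := by nlinarith [mul_le_mul_of_nonneg_left h1 ht0.le]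
    have h4 : c * ((1-t)*q^2) ≤ δ * q := (mul_le_mul_iff_right₀ ht0).mp h3
    have h5 : (1-t)*q^2 = 2*r*(c*((1-t)*q^2)) := by
      rw [hcdef]; field_simp
    have h6 := mul_le_mul_of_nonneg_left h4 (by positivity : (0:ℝ) ≤ 2*r)
    rw [h5]
    calc 2*r*(c*((1-t)*q^2)) ≤ 2*r*(δ*q) := h6
      _ = 2*r*δ*q := by ring
  have hq2 : q^2 ≤ 2*r*δ*q := by
    by_contra hcon
    push_neg at hcon
    have hqpos : 0 < q^2 := lt_of_le_of_lt (by positivity) hcon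
    set ε : ℝ := q^2 - 2*r*δ*q with hε
    have hεpos : 0 < ε := by simp [hε]; linarith
    have hεle : ε ≤ q^2 := by
      have h0 : 0 ≤ 2*r*δ*q := by positivity
      rw [hε]; linarith
    set t : ℝ := ε / (2 * q^2) with ht
    have ht0 : 0 < t := by positivity
    have ht1 : t < 1 := by
      rw [ht, div_lt_one (by positivity)]
      linarith
    have := key t ht0 ht1
    have htq : t * q^2 = ε / 2 := by
      have hqne : q ≠ 0 := fun h0 => by simp [h0] at hqpos
      rw [ht]; field_simp
    nlinarith
  rcases eq_or_lt_of_le hq0 with h | h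
  · rw [← h]; positivity
  · nlinarith
end
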